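/- Let Y be a metric space which is also a real vector space, λ > 0, and let π : X → Y be a quotient map satisfying condition (★) with exponent λ, where either X = ℝ, or X = ℝ^s with the Euclidean norm and every fiber of π is contained in an affine line. Let φ and ψ be intrinsically L-Lipschitz sections of π, and suppose there exists c ≥ 1 such that dist(π⁻¹(y), π⁻¹(z)) ≥ (1/c)·dist(f(y), π⁻¹(z)) for all y, z ∈ Y and for both f = φ and f = ψ. Then for the section η := φ + ψ of (1/2)·π one has the Leibniz-type bound Ils_{(1/2)π}(η)(y) ≤ (c / 2^{1/λ}) · ( Ils_π(φ)(y) + Ils_π(ψ)(y) ) for every y ∈ Y, where Ils_{(1/2)π}(η) is the intrinsic slope computed with the fibers {x ∈ X : π(x) = 2y}. -/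

import Mathlib

/-!
Dilating by `2^(-1/λ)` maps the fibres of `½π` onto those of `π` and, by (★), sends
`φ(y) + ψ(y)` into `π⁻¹(y)`. Hence the distance from `η(y)` to the `½π`-fibre of `z` is at least
`2^(1/λ) · d(π⁻¹(y), π⁻¹(z)) ≥ (2^(1/λ)/c) · d(f(y), π⁻¹(z))` for `f = φ, ψ`. Together with
`d(η(y), η(z)) ≤ d(φ(y), φ(z)) + d(ψ(y), ψ(z))` this bounds each difference quotient of `η` by
`c/2^(1/λ)` times the sum of those of `φ` and `ψ`, and the bound passes to the upper limit.
-/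

/-- Signed power: `α^[λ] := sign(α)·|α|^λ`. -/
noncomputable def spow (α lam : ℝ) : ℝ := Real.sign α * |α| ^ lam

/-- The intrinsic slope at `ȳ` of a section `φ : Y → X`, computed with respect to a
family of fibers `F : Y → Set X`. -/
noncomputable def IlsFib {X Y : Type*} [MetricSpace X] [MetricSpace Y]
    (F : Y → Set X) (φ : Y → X) (ybar : Y) : ℝ :=
  ⨅ r : {r : ℝ // 0 < r},
    sSup ((fun y => dist (φ ybar) (φ y) / Metric.infDist (φ ybar) (F y)) ''
      (Metric.ball ybar r \ {ybar}))

/-- Distance between two subsets of a metric space: `inf{d(a,b) : a ∈ A, b ∈ B}`. -/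
noncomputable def setDist {X : Type*} [MetricSpace X] (A B : Set X) : ℝ :=
  sInf (Set.image2 dist A B)

open Metric

/-- Condition (★) with exponent `lam`. -/
def IsSpowLinear {X Y : Type*} [AddCommGroup X] [Module ℝ X] [AddCommGroup Y] [Module ℝ Y]
    (π : X → Y) (lam : ℝ) : Prop :=
  ∀ x₁ x₂ : X, ∀ α β : ℝ, (α, β) ≠ (0, 0) →
    π (α • x₁ + β • x₂) = spow α lam • π x₁ + spow β lam • π x₂

def IntrinsicLipschitzWith {X Y : Type*} [MetricSpace X] (L : ℝ) (π : X → Y)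
    (φ : Y → X) : Prop :=
  ∀ y₁ y₂ : Y, dist (φ y₁) (φ y₂) ≤ L * infDist (φ y₁) (π ⁻¹' {y₂})

noncomputable def puncturedUpperLimit {Y : Type*} [PseudoMetricSpace Y] (f : Y → ℝ) (y : Y) :
    ℝ :=
  ⨅ r : {r : ℝ // 0 < r}, sSup (f '' (ball y r \ {y}))

@[simp]
lemma spow_zero_left (lam : ℝ) : spow 0 lam = 0 := by
  simp [spow]

lemma spow_of_pos {t : ℝ} (ht : 0 < t) (lam : ℝ) : spow t lam = t ^ lam := by
  rw [spow, Real.sign_of_pos ht, abs_of_pos ht, one_mul]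

@[simp]
lemma spow_one_left (lam : ℝ) : spow 1 lam = 1 := by
  rw [spow_of_pos one_pos, Real.one_rpow]

lemma spow_rpow_one_div {a lam : ℝ} (ha : 0 < a) (hlam : lam ≠ 0) :
    spow (a ^ (1 / lam)) lam = a := by
  rw [spow_of_pos (Real.rpow_pos_of_pos ha _), one_div, Real.rpow_inv_rpow ha.le hlam]

lemma setDist_le_dist {X : Type*} [MetricSpace X] {A B : Set X} {a b : X} (ha : a ∈ A)
    (hb : b ∈ B) : setDist A B ≤ dist a b :=
  csInf_le ⟨0, by rintro _ ⟨_, _, _, _, rfl⟩; exact dist_nonneg⟩ (Set.mem_image2_of_mem ha hb)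

namespace IsSpowLinear

variable {Y : Type*} [AddCommGroup Y] [Module ℝ Y] {lam : ℝ}

section

variable {X : Type*} [AddCommGroup X] [Module ℝ X] {π : X → Y}

lemma map_smul (hπ : IsSpowLinear π lam) {t : ℝ} (ht : t ≠ 0) (x : X) :
    π (t • x) = spow t lam • π x := by
  simpa using hπ x x t 0 (by simp [ht])

lemma map_add (hπ : IsSpowLinear π lam) (x₁ x₂ : X) : π (x₁ + x₂) = π x₁ + π x₂ := by
  simpa using hπ x₁ x₂ 1 1 (by simp)

lemma map_inv_smul_of_pos (hπ : IsSpowLinear π lam) {t : ℝ} (ht : 0 < t) {x : X} {w : Y}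
    (hx : π x = spow t lam • w) : π (t⁻¹ • x) = w := by
  rw [hπ.map_smul (inv_ne_zero ht.ne'), hx, smul_smul, spow_of_pos (inv_pos.2 ht),
    spow_of_pos ht, Real.inv_rpow ht.le, inv_mul_cancel₀ (Real.rpow_pos_of_pos ht _).ne',
    one_smul]

end

variable {X : Type*} [NormedAddCommGroup X] [NormedSpace ℝ X] {π : X → Y}

lemma mul_setDist_le_infDist (hπ : IsSpowLinear π lam) {t : ℝ} (ht : 0 < t) {p : X} {y z : Y}
    (hp : π p = spow t lam • y) (hz : (π ⁻¹' {z}).Nonempty) :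
    t * setDist (π ⁻¹' {y}) (π ⁻¹' {z}) ≤ infDist p {x | π x = spow t lam • z} := by
  obtain ⟨x₀, hx₀⟩ := hz
  have hne : {x | π x = spow t lam • z}.Nonempty :=
    ⟨t • x₀, by rw [Set.mem_ofPred_eq, hπ.map_smul ht.ne', show π x₀ = z from hx₀]⟩
  refine (le_infDist hne).2 fun w hw => ?_
  calc t * setDist (π ⁻¹' {y}) (π ⁻¹' {z})
      ≤ t * dist (t⁻¹ • p) (t⁻¹ • w) := by
        gcongr
        exact setDist_le_dist (hπ.map_inv_smul_of_pos ht hp) (hπ.map_inv_smul_of_pos ht hw)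
    _ = dist p w := by
        rw [dist_smul₀, Real.norm_eq_abs, abs_inv, abs_of_pos ht, mul_inv_cancel_left₀ ht.ne']

lemma infDist_fiber_le_mul_infDist (hπ : IsSpowLinear π lam) {t c : ℝ} (ht : 0 < t)
    (hc : 0 < c) {f : Y → X} {p : X} {y z : Y} (hp : π p = spow t lam • y)
    (hz : (π ⁻¹' {z}).Nonempty)
    (hcf : setDist (π ⁻¹' {y}) (π ⁻¹' {z}) ≥ c⁻¹ * infDist (f y) (π ⁻¹' {z})) :
    infDist (f y) (π ⁻¹' {z}) ≤ c / t * infDist p {x | π x = spow t lam • z} := by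
  have hD := hπ.mul_setDist_le_infDist ht hp hz
  calc infDist (f y) (π ⁻¹' {z})
      ≤ c * setDist (π ⁻¹' {y}) (π ⁻¹' {z}) := by rwa [ge_iff_le, inv_mul_le_iff₀ hc] at hcf
    _ = c / t * (t * setDist (π ⁻¹' {y}) (π ⁻¹' {z})) := by field_simp
    _ ≤ c / t * infDist p {x | π x = spow t lam • z} := by gcongr

end IsSpowLinear

namespace IntrinsicLipschitzWith

variable {X Y : Type*} [MetricSpace X] {L : ℝ} {π : X → Y} {φ : Y → X}

lemma infDist_pos (hφ : IntrinsicLipschitzWith L π φ) (hsec : ∀ y, π (φ y) = y) {y z : Y}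
    (hzy : z ≠ y) : 0 < infDist (φ y) (π ⁻¹' {z}) := by
  refine infDist_nonneg.lt_of_ne' fun h0 => hzy ?_
  have hdist := hφ y z
  rw [h0, mul_zero] at hdist
  have : φ y = φ z := dist_le_zero.1 hdist
  rw [← hsec z, ← this, hsec y]

lemma bddAbove_ratio (hφ : IntrinsicLipschitzWith L π φ) (hsec : ∀ y, π (φ y) = y) (y : Y) :
    BddAbove ((fun z => dist (φ y) (φ z) / infDist (φ y) (π ⁻¹' {z})) '' {y}ᶜ) := by
  refine ⟨L, ?_⟩
  rintro _ ⟨z, hzy, rfl⟩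
  exact (div_le_iff₀ (hφ.infDist_pos hsec hzy)).2 (hφ y z)

end IntrinsicLipschitzWith

section puncturedUpperLimit

variable {Y : Type*} [PseudoMetricSpace Y] {f g h : Y → ℝ} {y : Y}

lemma IlsFib_eq_puncturedUpperLimit {X Y : Type*} [MetricSpace X] [MetricSpace Y]
    (F : Y → Set X) (φ : Y → X) (y : Y) :
    IlsFib F φ y = puncturedUpperLimit (fun z => dist (φ y) (φ z) / infDist (φ y) (F z)) y :=
  rfl

lemma sSup_image_ball_diff_mono (hf₀ : ∀ z, 0 ≤ f z) (hf : BddAbove (f '' {y}ᶜ)) {r₁ r₂ : ℝ}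
    (hr : r₁ ≤ r₂) : sSup (f '' (ball y r₁ \ {y})) ≤ sSup (f '' (ball y r₂ \ {y})) := by
  have hbdd : BddAbove (f '' (ball y r₂ \ {y})) :=
    hf.mono (Set.image_mono fun z hz => hz.2)
  refine Real.sSup_le ?_ (Real.sSup_nonneg ?_)
  · rintro _ ⟨z, hz, rfl⟩
    exact le_csSup hbdd ⟨z, ⟨ball_subset_ball hr hz.1, hz.2⟩, rfl⟩
  · rintro _ ⟨z, -, rfl⟩
    exact hf₀ z

lemma puncturedUpperLimit_le_mul_add {K : ℝ} (hK : 0 ≤ K) (hf₀ : ∀ z, 0 ≤ f z)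
    (hg₀ : ∀ z, 0 ≤ g z) (hh₀ : ∀ z, 0 ≤ h z) (hf : BddAbove (f '' {y}ᶜ))
    (hg : BddAbove (g '' {y}ᶜ)) (hfgh : ∀ z, z ≠ y → h z ≤ K * (f z + g z)) :
    puncturedUpperLimit h y ≤ K * (puncturedUpperLimit f y + puncturedUpperLimit g y) := by
  have : Nonempty {r : ℝ // 0 < r} := ⟨⟨1, one_pos⟩⟩
  have hS₀ : ∀ (u : Y → ℝ), (∀ z, 0 ≤ u z) → ∀ r : ℝ, 0 ≤ sSup (u '' (ball y r \ {y})) :=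
    fun u hu r => Real.sSup_nonneg (by rintro _ ⟨z, -, rfl⟩; exact hu z)
  simp only [puncturedUpperLimit, mul_add, Real.mul_iInf_of_nonneg hK]
  refine le_ciInf_add_ciInf fun r₁ r₂ => ?_
  let r : {r : ℝ // 0 < r} := ⟨min r₁ r₂, lt_min r₁.2 r₂.2⟩
  calc puncturedUpperLimit h y
      ≤ sSup (h '' (ball y r \ {y})) :=
        ciInf_le ⟨0, by rintro _ ⟨r', rfl⟩; exact hS₀ h hh₀ r'⟩ r
    _ ≤ K * sSup (f '' (ball y r \ {y})) + K * sSup (g '' (ball y r \ {y})) := by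
        refine Real.sSup_le ?_ (by have := hS₀ f hf₀ r; have := hS₀ g hg₀ r; positivity)
        rintro _ ⟨z, hz, rfl⟩
        refine (hfgh z hz.2).trans ?_
        rw [mul_add]
        gcongr
        · exact le_csSup (hf.mono (Set.image_mono fun z hz => hz.2)) ⟨z, hz, rfl⟩
        · exact le_csSup (hg.mono (Set.image_mono fun z hz => hz.2)) ⟨z, hz, rfl⟩
    _ ≤ K * sSup (f '' (ball y r₁ \ {y})) + K * sSup (g '' (ball y r₂ \ {y})) := by
        gcongr K * ?_ + K * ?_
        · exact sSup_image_ball_diff_mono hf₀ hf (min_le_left _ _)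
        · exact sSup_image_ball_diff_mono hg₀ hg (min_le_right _ _)

end puncturedUpperLimit

lemma div_le_mul_div_of_le_mul {a d D K : ℝ} (hK : 0 ≤ K) (ha : 0 < a) (haD : a ≤ K * D)
    (hd : 0 ≤ d) : d / D ≤ K * (d / a) := by
  have hD : 0 < D := pos_of_mul_pos_right (ha.trans_le haD) hK
  rw [mul_div_assoc', div_le_div_iff₀ hD ha]
  nlinarith

lemma IntrinsicLipschitzWith.dist_div_infDist_dilated_fiber_le {X Y : Type*}
    [NormedAddCommGroup X] [NormedSpace ℝ X] [AddCommGroup Y] [Module ℝ Y] {π : X → Y}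
    {lam L t c : ℝ} {f : Y → X} (hf : IntrinsicLipschitzWith L π f) (hsec : ∀ y, π (f y) = y)
    (hπ : IsSpowLinear π lam) (ht : 0 < t) (hc : 0 < c) {p : X} {y z : Y}
    (hp : π p = spow t lam • y) (hzy : z ≠ y)
    (hcf : setDist (π ⁻¹' {y}) (π ⁻¹' {z}) ≥ c⁻¹ * infDist (f y) (π ⁻¹' {z})) :
    dist (f y) (f z) / infDist p {x | π x = spow t lam • z} ≤
      c / t * (dist (f y) (f z) / infDist (f y) (π ⁻¹' {z})) :=
  div_le_mul_div_of_le_mul (by positivity) (hf.infDist_pos hsec hzy)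
    (hπ.infDist_fiber_le_mul_infDist ht hc hp ⟨f z, hsec z⟩ hcf) dist_nonneg

theorem statement_5_general {s : ℕ} {Y : Type*} [MetricSpace Y] [AddCommGroup Y] [Module ℝ Y]
    (lam : ℝ) (hlam : 0 < lam)
    (π : EuclideanSpace ℝ (Fin s) → Y)
    (hstar : ∀ x₁ x₂ : EuclideanSpace ℝ (Fin s), ∀ α β : ℝ, (α, β) ≠ (0, 0) →
      π (α • x₁ + β • x₂) = spow α lam • π x₁ + spow β lam • π x₂)
    (L : ℝ)
    (φ ψ : Y → EuclideanSpace ℝ (Fin s))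
    (hφsec : ∀ y, π (φ y) = y) (hψsec : ∀ y, π (ψ y) = y)
    (hφlip : ∀ y₁ y₂ : Y, dist (φ y₁) (φ y₂) ≤ L * Metric.infDist (φ y₁) (π ⁻¹' {y₂}))
    (hψlip : ∀ y₁ y₂ : Y, dist (ψ y₁) (ψ y₂) ≤ L * Metric.infDist (ψ y₁) (π ⁻¹' {y₂}))
    (c : ℝ) (hc : 1 ≤ c)
    (hcφ : ∀ y z : Y, setDist (π ⁻¹' {y}) (π ⁻¹' {z}) ≥
      c⁻¹ * Metric.infDist (φ y) (π ⁻¹' {z}))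
    (hcψ : ∀ y z : Y, setDist (π ⁻¹' {y}) (π ⁻¹' {z}) ≥
      c⁻¹ * Metric.infDist (ψ y) (π ⁻¹' {z})) :
    ∀ y : Y, IlsFib (fun z => {x | π x = (2 : ℝ) • z}) (fun z => φ z + ψ z) y ≤
      c / (2 : ℝ) ^ (1 / lam) *
        (IlsFib (fun z => π ⁻¹' {z}) φ y + IlsFib (fun z => π ⁻¹' {z}) ψ y) := by
  intro y
  have hπ : IsSpowLinear π lam := hstar
  have hφ : IntrinsicLipschitzWith L π φ := hφlip
  have hψ : IntrinsicLipschitzWith L π ψ := hψlip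
  have hc₀ : 0 < c := one_pos.trans_le hc
  set t : ℝ := (2 : ℝ) ^ (1 / lam)
  have ht : 0 < t := by positivity
  have h2 : spow t lam = 2 := spow_rpow_one_div two_pos hlam.ne'
  have hsum : π (φ y + ψ y) = spow t lam • y := by
    rw [hπ.map_add, hφsec, hψsec, h2, two_smul]
  have hfib : ∀ z : Y, {x | π x = (2 : ℝ) • z} = {x | π x = spow t lam • z} := fun z => by
    rw [h2]
  simp only [IlsFib_eq_puncturedUpperLimit]
  refine puncturedUpperLimit_le_mul_add (by positivity)
    (fun _ => div_nonneg dist_nonneg infDist_nonneg) (fun _ => div_nonneg dist_nonneg infDist_nonneg)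
    (fun _ => div_nonneg dist_nonneg infDist_nonneg) (hφ.bddAbove_ratio hφsec y)
    (hψ.bddAbove_ratio hψsec y) fun z hzy => ?_
  rw [hfib, mul_add]
  calc _ ≤ (dist (φ y) (φ z) + dist (ψ y) (ψ z)) /
        infDist (φ y + ψ y) {x | π x = spow t lam • z} :=
        div_le_div_of_nonneg_right (dist_add_add_le _ _ _ _) infDist_nonneg
    _ = _ := add_div _ _ _
    _ ≤ _ := add_le_add (hφ.dist_div_infDist_dilated_fiber_le hφsec hπ ht hc₀ hsum hzy (hcφ y z))
        (hψ.dist_div_infDist_dilated_fiber_le hψsec hπ ht hc₀ hsum hzy (hcψ y z))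

/-- Leibniz formula: if `π : ℝ^s → Y` is a quotient map satisfying (★) with exponent
`λ > 0`, where either `s = 1` or each fiber is contained in an affine line, `φ, ψ` are
intrinsically `L`-Lipschitz sections of `π`, and `c ≥ 1` satisfies
`d(π⁻¹(y),π⁻¹(z)) ≥ (1/c)·d(f(y),π⁻¹(z))` for `f = φ, ψ`, then for `η := φ + ψ`,
`Ils_{(1/2)π}(η)(y) ≤ (c/2^{1/λ})·(Ils_π(φ)(y) + Ils_π(ψ)(y))` for every `y`. -/
theorem statement_5 {s : ℕ} {Y : Type*} [MetricSpace Y] [AddCommGroup Y] [Module ℝ Y]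
    (lam : ℝ) (hlam : 0 < lam)
    (π : EuclideanSpace ℝ (Fin s) → Y)
    (hcont : Continuous π) (hopen : IsOpenMap π) (hsurj : Function.Surjective π)
    (hstar : ∀ x₁ x₂ : EuclideanSpace ℝ (Fin s), ∀ α β : ℝ, (α, β) ≠ (0, 0) →
      π (α • x₁ + β • x₂) = spow α lam • π x₁ + spow β lam • π x₂)
    (hcase : s = 1 ∨ ∀ y : Y, ∃ a v : EuclideanSpace ℝ (Fin s), v ≠ 0 ∧
      π ⁻¹' {y} ⊆ {x | ∃ t : ℝ, x = a + t • v})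
    (L : ℝ) (hL : 1 ≤ L)
    (φ ψ : Y → EuclideanSpace ℝ (Fin s))
    (hφsec : ∀ y, π (φ y) = y) (hψsec : ∀ y, π (ψ y) = y)
    (hφlip : ∀ y₁ y₂ : Y, dist (φ y₁) (φ y₂) ≤ L * Metric.infDist (φ y₁) (π ⁻¹' {y₂}))
    (hψlip : ∀ y₁ y₂ : Y, dist (ψ y₁) (ψ y₂) ≤ L * Metric.infDist (ψ y₁) (π ⁻¹' {y₂}))
    (c : ℝ) (hc : 1 ≤ c)
    (hcφ : ∀ y z : Y, setDist (π ⁻¹' {y}) (π ⁻¹' {z}) ≥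
      c⁻¹ * Metric.infDist (φ y) (π ⁻¹' {z}))
    (hcψ : ∀ y z : Y, setDist (π ⁻¹' {y}) (π ⁻¹' {z}) ≥
      c⁻¹ * Metric.infDist (ψ y) (π ⁻¹' {z})) :
    ∀ y : Y, IlsFib (fun z => {x | π x = (2 : ℝ) • z}) (fun z => φ z + ψ z) y ≤
      c / (2 : ℝ) ^ (1 / lam) *
        (IlsFib (fun z => π ⁻¹' {z}) φ y + IlsFib (fun z => π ⁻¹' {z}) ψ y) :=
  statement_5_general lam hlam π hstar L φ ψ hφsec hψsec hφlip hψlip c hc hcφ hcψ
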